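/- Let Diagram 1 of abelian groups be given, let Y = F ×_Q G be the pullback, and let α : Hom(R ⊕ S, P) → Ext¹(Q, P) be the connecting homomorphism obtained by applying the functor Hom(−, P) to the short exact sequence 0 → R ⊕ S → Y → Q → 0. If α is surjective, then for any two extensions (X, i, j, m, n) and (X₁, i₁, j₁, m₁, n₁) of Diagram 1 there exists a group isomorphism φ : X → X₁ satisfying φ∘(i∘μ) = i₁∘μ, m₁∘φ = m, and n₁∘φ = n (equivalently, φ carries the extension 0 → P → X → Y → 0 to the extension 0 → P → X₁ → Y → 0 over the identities of P and Y). -/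

import Mathlib

universe u

open CategoryTheory

noncomputable instance : HasDerivedCategory.{max (u+1) u} AddCommGrpCat.{u} :=
  HasDerivedCategory.standard _

instance : HasExt.{max (u+1) u} AddCommGrpCat.{u} :=
  hasExt_of_hasDerivedCategory _

variable {F G Q R S : Type u}
  [AddCommGroup F] [AddCommGroup G] [AddCommGroup Q] [AddCommGroup R] [AddCommGroup S]

def pullbackSubgroup (πF : F →+ Q) (πG : G →+ Q) : AddSubgroup (F × G) where
  carrier := {p | πF p.1 = πG p.2}
  zero_mem' := by simp
  add_mem' := by
    intro a b ha hb
    simp only [Set.mem_setOf_eq, Prod.fst_add, Prod.snd_add, map_add] at *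
    rw [ha, hb]
  neg_mem' := by
    intro a ha
    simp only [Set.mem_setOf_eq, Prod.fst_neg, Prod.snd_neg, map_neg] at *
    rw [ha]

def iotaRS (ρ : R →+ F) (σ : S →+ G) (πF : F →+ Q) (πG : G →+ Q)
    (hkerF : AddMonoidHom.ker πF = AddMonoidHom.range ρ)
    (hkerG : AddMonoidHom.ker πG = AddMonoidHom.range σ) :
    R × S →+ pullbackSubgroup πF πG :=
  AddMonoidHom.codRestrict (AddMonoidHom.prodMap ρ σ) _ (by
    intro p
    have h1 : ρ p.1 ∈ AddMonoidHom.ker πF := by rw [hkerF]; exact ⟨p.1, rfl⟩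
    have h2 : σ p.2 ∈ AddMonoidHom.ker πG := by rw [hkerG]; exact ⟨p.2, rfl⟩
    show πF (ρ p.1) = πG (σ p.2)
    rw [AddMonoidHom.mem_ker] at h1 h2
    rw [h1, h2])

def piY (πF : F →+ Q) (πG : G →+ Q) : pullbackSubgroup πF πG →+ Q :=
  πF.comp ((AddMonoidHom.fst F G).comp (pullbackSubgroup πF πG).subtype)

/-- The short complex `R ⊕ S → Y → Q` in the category of abelian groups. -/
def pullbackShortComplex (ρ : R →+ F) (σ : S →+ G) (πF : F →+ Q) (πG : G →+ Q)
    (hkerF : AddMonoidHom.ker πF = AddMonoidHom.range ρ)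
    (hkerG : AddMonoidHom.ker πG = AddMonoidHom.range σ) :
    ShortComplex AddCommGrpCat.{u} :=
  ShortComplex.mk
    (AddCommGrpCat.ofHom (iotaRS ρ σ πF πG hkerF hkerG))
    (AddCommGrpCat.ofHom (piY πF πG))
    (by
      ext p
      show πF (ρ p.1) = 0
      have h1 : ρ p.1 ∈ AddMonoidHom.ker πF := by rw [hkerF]; exact ⟨p.1, rfl⟩
      rwa [AddMonoidHom.mem_ker] at h1)

/-- The sequence `0 → R ⊕ S → Y → Q → 0` is short exact. -/
lemma pullbackShortComplex_shortExact
    (ρ : R →+ F) (σ : S →+ G) (πF : F →+ Q) (πG : G →+ Q)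
    (hρ : Function.Injective ρ) (hσ : Function.Injective σ)
    (hπF : Function.Surjective πF) (hπG : Function.Surjective πG)
    (hkerF : AddMonoidHom.ker πF = AddMonoidHom.range ρ)
    (hkerG : AddMonoidHom.ker πG = AddMonoidHom.range σ) :
    (pullbackShortComplex ρ σ πF πG hkerF hkerG).ShortExact where
  exact := by
    rw [ShortComplex.ab_exact_iff]
    intro y hy
    obtain ⟨⟨yf, yg⟩, hymem⟩ := y
    have hymem' : πF yf = πG yg := hymem
    have hy' : πF yf = 0 := hy
    have h1 : yf ∈ AddMonoidHom.ker πF := hy'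
    rw [hkerF] at h1
    obtain ⟨r, hr⟩ := h1
    have h2 : yg ∈ AddMonoidHom.ker πG := by
      rw [AddMonoidHom.mem_ker, ← hymem']; exact hy'
    rw [hkerG] at h2
    obtain ⟨s, hs⟩ := h2
    exact ⟨(r, s), Subtype.ext (Prod.ext hr hs)⟩
  mono_f := by
    rw [AddCommGrpCat.mono_iff_injective]
    intro a b hab
    have h1 : (ρ.prodMap σ) a = (ρ.prodMap σ) b := congrArg Subtype.val hab
    have h2 : ρ a.1 = ρ b.1 := congrArg Prod.fst h1
    have h3 : σ a.2 = σ b.2 := congrArg Prod.snd h1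
    exact Prod.ext (hρ h2) (hσ h3)
  epi_g := by
    rw [AddCommGrpCat.epi_iff_surjective]
    intro q
    obtain ⟨f, hf⟩ := hπF q
    obtain ⟨g, hg⟩ := hπG q
    exact ⟨⟨(f, g), hf.trans hg.symm⟩, hf⟩

open Abelian in
/-- The connecting homomorphism `α : Hom(R ⊕ S, P) → Ext¹(Q, P)` obtained by applying
`Hom(−, P)` to the short exact sequence `0 → R ⊕ S → Y → Q → 0`; it is given by the
Yoneda composition of the extension class of this sequence with a homomorphism. -/
noncomputable def alphaMap {P : Type u} [AddCommGroup P]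
    (ρ : R →+ F) (σ : S →+ G) (πF : F →+ Q) (πG : G →+ Q)
    (hρ : Function.Injective ρ) (hσ : Function.Injective σ)
    (hπF : Function.Surjective πF) (hπG : Function.Surjective πG)
    (hkerF : AddMonoidHom.ker πF = AddMonoidHom.range ρ)
    (hkerG : AddMonoidHom.ker πG = AddMonoidHom.range σ) :
    (R × S →+ P) → Ext (AddCommGrpCat.of Q) (AddCommGrpCat.of P) 1 :=
  fun lam =>
    (pullbackShortComplex_shortExact ρ σ πF πG hρ hσ hπF hπG hkerF hkerG).extClass.comp
      (Ext.mk₀ (AddCommGrpCat.ofHom lam)) (add_zero 1)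

namespace CategoryTheory.ShortComplex.ShortExact

open Abelian

universe w v' u'

variable {C : Type u'} [Category.{v'} C] [Abelian C] [HasExt.{w} C]

theorem exists_retraction_of_extClass_eq_zero {T : ShortComplex C} (hT : T.ShortExact)
    (h : hT.extClass = 0) : ∃ r : T.X₂ ⟶ T.X₁, T.f ≫ r = 𝟙 T.X₁ := by
  obtain ⟨x, hx⟩ := Ext.contravariant_sequence_exact₁ hT _ (Ext.mk₀ (𝟙 T.X₁)) (add_zero 1)
    (by rw [Ext.comp_mk₀_id, h])
  refine ⟨Ext.homEquiv₀ x, (Ext.mk₀_bijective _ _).1 ?_⟩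
  rw [← Ext.mk₀_comp_mk₀, Ext.mk₀_homEquiv₀_apply, hx]

theorem eq_zero_of_mk₀_f_comp_eq_zero {T : ShortComplex C} (hT : T.ShortExact) {Z : C}
    (hα : Function.Surjective fun l : T.X₁ ⟶ Z => hT.extClass.comp (Ext.mk₀ l) (add_zero 1))
    {e : Ext T.X₂ Z 1} (he : (Ext.mk₀ T.f).comp e (zero_add 1) = 0) : e = 0 := by
  obtain ⟨x, rfl⟩ := Ext.contravariant_sequence_exact₂ hT _ e he
  obtain ⟨l, rfl⟩ := hα x
  exact hT.comp_extClass_assoc _ _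

theorem mk₀_comp_extClass_eq_zero_of_fac {T : ShortComplex C} (hT : T.ShortExact) {A : C}
    {f : A ⟶ T.X₃} (t : A ⟶ T.X₂) (ht : t ≫ T.g = f) :
    (Ext.mk₀ f).comp hT.extClass (zero_add 1) = 0 := by
  rw [← ht, ← Ext.mk₀_comp_mk₀_assoc, hT.comp_extClass, Ext.comp_zero]

end CategoryTheory.ShortComplex.ShortExact

theorem mem_pullbackSubgroup {πF : F →+ Q} {πG : G →+ Q} {p : F × G} :
    p ∈ pullbackSubgroup πF πG ↔ πF p.1 = πG p.2 :=
  Iff.rfl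

namespace AddGroupExtension

variable {N M M₁ Y : Type u} [AddCommGroup N] [AddCommGroup M] [AddCommGroup M₁] [AddCommGroup Y]

theorem exists_inl_eq_of_rightHom_eq_zero (T : AddGroupExtension N M Y) {x : M}
    (hx : T.rightHom x = 0) : ∃ n, T.inl n = x := by
  rwa [← AddMonoidHom.mem_range, T.range_inl_eq_ker_rightHom]

def shortComplex (T : AddGroupExtension N M Y) : ShortComplex AddCommGrpCat.{u} :=
  ShortComplex.mk (AddCommGrpCat.ofHom T.inl) (AddCommGrpCat.ofHom T.rightHom)
    (by ext; simp)

theorem shortComplex_shortExact (T : AddGroupExtension N M Y) : T.shortComplex.ShortExact where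
  exact := by
    rw [ShortComplex.ab_exact_iff]
    exact fun _ => T.exists_inl_eq_of_rightHom_eq_zero
  mono_f := (AddCommGrpCat.mono_iff_injective _).2 T.inl_injective
  epi_g := (AddCommGrpCat.epi_iff_surjective _).2 T.rightHom_surjective

variable (T : AddGroupExtension N M Y) (T₁ : AddGroupExtension N M₁ Y)

def antidiagonal : N →+ pullbackSubgroup T.rightHom T₁.rightHom :=
  (T.inl.prod T₁.inl).codRestrict _ fun n => by simp [mem_pullbackSubgroup]

def inlFst : N →+ pullbackSubgroup T.rightHom T₁.rightHom :=
  (T.inl.prod 0).codRestrict _ fun n => by simp [mem_pullbackSubgroup]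

def inlSnd : N →+ pullbackSubgroup T.rightHom T₁.rightHom :=
  (AddMonoidHom.prod 0 T₁.inl).codRestrict _ fun n => by simp [mem_pullbackSubgroup]

@[simp]
theorem coe_antidiagonal (n : N) : (antidiagonal T T₁ n : M × M₁) = (T.inl n, T₁.inl n) := rfl

@[simp]
theorem coe_inlFst (n : N) : (inlFst T T₁ n : M × M₁) = (T.inl n, 0) := rfl

theorem inlFst_add_inlSnd (n : N) : inlFst T T₁ n + inlSnd T T₁ n = antidiagonal T T₁ n :=
  Subtype.ext (Prod.ext (add_zero _) (zero_add _))

def pullbackFst : pullbackSubgroup T.rightHom T₁.rightHom →+ M :=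
  (AddMonoidHom.fst M M₁).comp (pullbackSubgroup _ _).subtype

abbrev BaerDiff : Type u := pullbackSubgroup T.rightHom T₁.rightHom ⧸ (antidiagonal T T₁).range

def baerDiff : AddGroupExtension N (BaerDiff T T₁) Y where
  inl := (QuotientAddGroup.mk' _).comp (inlFst T T₁)
  rightHom := QuotientAddGroup.lift _ (T.rightHom.comp (pullbackFst T T₁))
    (by rintro _ ⟨n, rfl⟩; exact T.rightHom_inl n)
  inl_injective := by
    refine (injective_iff_map_eq_zero _).2 fun n hn => ?_
    obtain ⟨k, hk⟩ := (QuotientAddGroup.eq_zero_iff _).1 hn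
    have hk₁ : T.inl k = T.inl n := congrArg (·.1.1) hk
    have hk₂ : T₁.inl k = 0 := congrArg (·.1.2) hk
    rw [T₁.inl_injective (hk₂.trans (map_zero _).symm), map_zero] at hk₁
    exact T.inl_injective (hk₁.symm.trans (map_zero _).symm)
  range_inl_eq_ker_rightHom := by
    ext w
    constructor
    · rintro ⟨n, rfl⟩
      exact T.rightHom_inl n
    · induction w using QuotientAddGroup.induction_on with | H d => ?_
      obtain ⟨⟨x, x₁⟩, hd⟩ := d
      intro hx
      change T.rightHom x = 0 at hx
      obtain ⟨n, rfl⟩ := T.exists_inl_eq_of_rightHom_eq_zero hx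
      obtain ⟨n₁, rfl⟩ := T₁.exists_inl_eq_of_rightHom_eq_zero
        ((mem_pullbackSubgroup.1 hd).symm.trans hx)
      refine ⟨n - n₁, QuotientAddGroup.eq.2 ⟨n₁, Subtype.ext ?_⟩⟩
      simp
  rightHom_surjective := by
    intro y
    obtain ⟨x, rfl⟩ := T.rightHom_surjective y
    obtain ⟨x₁, hx₁⟩ := T₁.rightHom_surjective (T.rightHom x)
    exact ⟨(⟨(x, x₁), hx₁.symm⟩ : pullbackSubgroup T.rightHom T₁.rightHom), rfl⟩

theorem baerDiff_inl_apply (n : N) :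
    (baerDiff T T₁).inl n = (inlFst T T₁ n : BaerDiff T T₁) := rfl

theorem mk_antidiagonal (n : N) : (antidiagonal T T₁ n : BaerDiff T T₁) = 0 :=
  (QuotientAddGroup.eq_zero_iff _).2 ⟨n, rfl⟩

theorem mk_inlSnd (n : N) : (inlSnd T T₁ n : BaerDiff T T₁) = -(baerDiff T T₁).inl n := by
  rw [eq_neg_iff_add_eq_zero, add_comm, baerDiff_inl_apply, ← QuotientAddGroup.mk_add,
    inlFst_add_inlSnd, mk_antidiagonal]

theorem pullbackFst_surjective : Function.Surjective (pullbackFst T T₁) := by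
  intro x
  obtain ⟨x₁, hx₁⟩ := T₁.rightHom_surjective (T.rightHom x)
  exact ⟨⟨(x, x₁), hx₁.symm⟩, rfl⟩

variable {T T₁}

def correctedSnd (r : BaerDiff T T₁ →+ N) : pullbackSubgroup T.rightHom T₁.rightHom →+ M₁ :=
  (AddMonoidHom.snd M M₁).comp (pullbackSubgroup _ _).subtype +
    T₁.inl.comp (r.comp (QuotientAddGroup.mk' _))

theorem ker_pullbackFst_le_ker_correctedSnd (r : BaerDiff T T₁ →+ N)
    (hr : ∀ n, r ((baerDiff T T₁).inl n) = n) :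
    (pullbackFst T T₁).ker ≤ (correctedSnd r).ker := by
  rintro ⟨⟨x, x₁⟩, hd⟩ (rfl : x = 0)
  obtain ⟨n, rfl⟩ := T₁.exists_inl_eq_of_rightHom_eq_zero
    ((mem_pullbackSubgroup.1 hd).symm.trans (map_zero _))
  have hd : (⟨(0, T₁.inl n), hd⟩ : pullbackSubgroup T.rightHom T₁.rightHom) = inlSnd T T₁ n := rfl
  change T₁.inl n + T₁.inl (r (QuotientAddGroup.mk _)) = 0
  rw [hd, mk_inlSnd, map_neg, hr, map_neg, add_neg_cancel]

noncomputable def equivOfRetraction (r : BaerDiff T T₁ →+ N)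
    (hr : ∀ n, r ((baerDiff T T₁).inl n) = n) : T.Equiv T₁ :=
  .ofAddMonoidHom ((pullbackFst T T₁).liftOfSurjective (pullbackFst_surjective T T₁)
      ⟨correctedSnd r, ker_pullbackFst_le_ker_correctedSnd r hr⟩)
    (by
      ext n
      rw [AddMonoidHom.comp_apply, show T.inl n = pullbackFst T T₁ (antidiagonal T T₁ n) from rfl,
        AddMonoidHom.liftOfRightInverse_comp_apply]
      change T₁.inl n + T₁.inl (r (QuotientAddGroup.mk _)) = T₁.inl n
      rw [mk_antidiagonal, map_zero, map_zero, add_zero])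
    (by
      ext x
      obtain ⟨⟨⟨x, x₁⟩, hd⟩, rfl⟩ := pullbackFst_surjective T T₁ x
      rw [AddMonoidHom.comp_apply, AddMonoidHom.liftOfRightInverse_comp_apply]
      change T₁.rightHom (x₁ + T₁.inl _) = T.rightHom x
      rw [map_add, rightHom_inl, add_zero, mem_pullbackSubgroup.1 hd])

theorem nonempty_equiv_of_extClass_baerDiff_eq_zero
    (h : (baerDiff T T₁).shortComplex_shortExact.extClass = 0) : Nonempty (T.Equiv T₁) := by
  obtain ⟨r, hr⟩ := ShortComplex.ShortExact.exists_retraction_of_extClass_eq_zero _ h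
  exact ⟨equivOfRetraction r.hom fun n => ConcreteCategory.congr_hom hr n⟩

theorem exists_lift_baerDiff {A B : Type u} [AddCommGroup A] [AddCommGroup B]
    {q : B →+ A} (hq : Function.Surjective q) (κ : A →+ Y) {u : B →+ M} {u₁ : B →+ M₁}
    (hu : T.rightHom.comp u = κ.comp q) (hu₁ : T₁.rightHom.comp u₁ = κ.comp q)
    (hker : ∀ b, q b = 0 → ∃ n, u b = T.inl n ∧ u₁ b = T₁.inl n) :
    ∃ t : A →+ BaerDiff T T₁, (baerDiff T T₁).rightHom.comp t = κ := by
  let v : B →+ pullbackSubgroup T.rightHom T₁.rightHom := (u.prod u₁).codRestrict _ fun b =>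
    (DFunLike.congr_fun hu b).trans (DFunLike.congr_fun hu₁ b).symm
  have hv : q.ker ≤ ((QuotientAddGroup.mk' (antidiagonal T T₁).range).comp v).ker := fun b hb => by
    obtain ⟨n, hn, hn₁⟩ := hker b hb
    have : v b = antidiagonal T T₁ n := Subtype.ext (Prod.ext hn hn₁)
    rw [AddMonoidHom.mem_ker, AddMonoidHom.comp_apply, this]
    exact mk_antidiagonal T T₁ n
  refine ⟨q.liftOfSurjective hq ⟨_, hv⟩, AddMonoidHom.ext fun a => ?_⟩
  obtain ⟨b, rfl⟩ := hq a
  rw [AddMonoidHom.comp_apply, AddMonoidHom.liftOfRightInverse_comp_apply]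
  exact DFunLike.congr_fun hu b

end AddGroupExtension

section Diagram

variable {P E H X : Type u} [AddCommGroup P] [AddCommGroup E] [AddCommGroup H] [AddCommGroup X]
  {ν : P →+ E} {πE : E →+ R} {σ : S →+ G} {πG : G →+ Q} {μ : P →+ H} {πH : H →+ S}
  {ρ : R →+ F} {πF : F →+ Q} {i : H →+ X} {j : E →+ X} {m : X →+ F} {n : X →+ G}

def toPullback (hsq4 : πF.comp m = πG.comp n) : X →+ pullbackSubgroup πF πG :=
  (m.prod n).codRestrict _ fun x => DFunLike.congr_fun hsq4 x

theorem toPullback_surjective (hrow2 : πG.ker = σ.range) (hπH : Function.Surjective πH)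
    (hm : Function.Surjective m) (hmidrow : m.ker = i.range) (hsq3 : n.comp i = σ.comp πH)
    (hsq4 : πF.comp m = πG.comp n) : Function.Surjective (toPullback hsq4) := by
  rintro ⟨⟨f, g⟩, hfg⟩
  obtain ⟨x, rfl⟩ := hm f
  have hg : g - n x ∈ πG.ker := by
    rw [AddMonoidHom.mem_ker, map_sub, ← mem_pullbackSubgroup.1 hfg, sub_eq_zero]
    exact DFunLike.congr_fun hsq4 x
  rw [hrow2] at hg
  obtain ⟨s, hs⟩ := hg
  obtain ⟨h, rfl⟩ := hπH s
  refine ⟨x + i h, Subtype.ext (Prod.ext ?_ ?_)⟩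
  · change m (x + i h) = m x
    rw [map_add, (AddMonoidHom.exact_iff.2 hmidrow).apply_apply_eq_zero, add_zero]
  · change n (x + i h) = g
    rw [map_add, ← AddMonoidHom.comp_apply n i, hsq3, AddMonoidHom.comp_apply, hs,
      add_sub_cancel]

theorem exists_eq_of_toPullback_eq_zero (hσ : Function.Injective σ)
    (hcol1 : πH.ker = μ.range) (hmidrow : m.ker = i.range) (hsq3 : n.comp i = σ.comp πH)
    (hsq4 : πF.comp m = πG.comp n) {x : X} (hx : toPullback hsq4 x = 0) :
    ∃ p, i (μ p) = x := by
  have hmx : m x = 0 := congrArg (fun y : pullbackSubgroup πF πG => (y : F × G).1) hx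
  have hnx : n x = 0 := congrArg (fun y : pullbackSubgroup πF πG => (y : F × G).2) hx
  obtain ⟨h, rfl⟩ := (AddMonoidHom.exact_iff.2 hmidrow x).1 hmx
  have hh : πH h = 0 := by
    refine hσ ?_
    rw [map_zero, ← AddMonoidHom.comp_apply σ, ← hsq3]
    exact hnx
  obtain ⟨p, rfl⟩ := (AddMonoidHom.exact_iff.2 hcol1 h).1 hh
  exact ⟨p, rfl⟩

def diagramExtension (hμ : Function.Injective μ) (hπH : Function.Surjective πH)
    (hcol1 : πH.ker = μ.range) (hσ : Function.Injective σ) (hrow2 : πG.ker = σ.range)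
    (hi : Function.Injective i) (hm : Function.Surjective m) (hmidrow : m.ker = i.range)
    (hsq3 : n.comp i = σ.comp πH) (hsq4 : πF.comp m = πG.comp n) :
    AddGroupExtension P X (pullbackSubgroup πF πG) where
  inl := i.comp μ
  rightHom := toPullback hsq4
  inl_injective := hi.comp hμ
  range_inl_eq_ker_rightHom := by
    ext x
    refine ⟨?_, exists_eq_of_toPullback_eq_zero hσ hcol1 hmidrow hsq3 hsq4⟩
    rintro ⟨p, rfl⟩
    refine Subtype.ext (Prod.ext ?_ ?_)
    · exact (AddMonoidHom.exact_iff.2 hmidrow).apply_apply_eq_zero (μ p)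
    · change n (i (μ p)) = 0
      rw [← AddMonoidHom.comp_apply n i, hsq3, AddMonoidHom.comp_apply,
        (AddMonoidHom.exact_iff.2 hcol1).apply_apply_eq_zero, map_zero]
  rightHom_surjective := toPullback_surjective hrow2 hπH hm hmidrow hsq3 hsq4

theorem toPullback_comp_coprod (hrow2 : πG.ker = σ.range) (hcol2 : πF.ker = ρ.range)
    (hmidrow : m.ker = i.range) (hmidcol : n.ker = j.range) (hsq2 : m.comp j = ρ.comp πE)
    (hsq3 : n.comp i = σ.comp πH) (hsq4 : πF.comp m = πG.comp n) :
    (toPullback hsq4).comp (j.coprod i) =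
      (iotaRS ρ σ πF πG hcol2 hrow2).comp (πE.prodMap πH) := by
  refine AddMonoidHom.ext fun ⟨e, h⟩ => Subtype.ext (Prod.ext ?_ ?_)
  · change m (j e + i h) = ρ (πE e)
    rw [map_add, (AddMonoidHom.exact_iff.2 hmidrow).apply_apply_eq_zero, add_zero,
      ← AddMonoidHom.comp_apply m j, hsq2, AddMonoidHom.comp_apply]
  · change n (j e + i h) = σ (πH h)
    rw [map_add, (AddMonoidHom.exact_iff.2 hmidcol).apply_apply_eq_zero, zero_add,
      ← AddMonoidHom.comp_apply n i, hsq3, AddMonoidHom.comp_apply]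

theorem exists_coprod_eq_of_prodMap_eq_zero {X₁ : Type u} [AddCommGroup X₁] {i₁ : H →+ X₁}
    {j₁ : E →+ X₁} (hrow1 : πE.ker = ν.range) (hcol1 : πH.ker = μ.range)
    (hsq1 : i.comp μ = j.comp ν) (hsq1₁ : i₁.comp μ = j₁.comp ν) {b : E × H}
    (hb : πE.prodMap πH b = 0) : ∃ p, j.coprod i b = i (μ p) ∧ j₁.coprod i₁ b = i₁ (μ p) := by
  obtain ⟨e, h⟩ := b
  obtain ⟨p, rfl⟩ := (AddMonoidHom.exact_iff.2 hrow1 e).1 (congrArg Prod.fst hb)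
  obtain ⟨p', rfl⟩ := (AddMonoidHom.exact_iff.2 hcol1 h).1 (congrArg Prod.snd hb)
  refine ⟨p + p', ?_, ?_⟩
  · rw [AddMonoidHom.coprod_apply, ← AddMonoidHom.comp_apply j, ← hsq1]
    simp
  · rw [AddMonoidHom.coprod_apply, ← AddMonoidHom.comp_apply j₁, ← hsq1₁]
    simp

end Diagram

open Abelian in
theorem pawar_uniqueness_of_alpha_surjective_general
    {P E H X X₁ : Type u} [AddCommGroup P] [AddCommGroup E] [AddCommGroup H]
    [AddCommGroup X] [AddCommGroup X₁]
    -- row 1 : 0 → P → E → R → 0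
    (ν : P →+ E) (πE : E →+ R)
    (hπE : Function.Surjective πE)
    (hrow1 : AddMonoidHom.ker πE = AddMonoidHom.range ν)
    -- row 2 : 0 → S → G → Q → 0
    (σ : S →+ G) (πG : G →+ Q)
    (hσ : Function.Injective σ) (hπG : Function.Surjective πG)
    (hrow2 : AddMonoidHom.ker πG = AddMonoidHom.range σ)
    -- column 1 : 0 → P → H → S → 0
    (μ : P →+ H) (πH : H →+ S)
    (hμ : Function.Injective μ) (hπH : Function.Surjective πH)
    (hcol1 : AddMonoidHom.ker πH = AddMonoidHom.range μ)
    -- column 2 : 0 → R → F → Q → 0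
    (ρ : R →+ F) (πF : F →+ Q)
    (hρ : Function.Injective ρ) (hπF : Function.Surjective πF)
    (hcol2 : AddMonoidHom.ker πF = AddMonoidHom.range ρ)
    -- the connecting homomorphism α is surjective
    (halpha : Function.Surjective
      (alphaMap (P := P) ρ σ πF πG hρ hσ hπF hπG hcol2 hrow2))
    -- the extension (X, i, j, m, n) of Diagram 1
    (i : H →+ X) (j : E →+ X) (m : X →+ F) (n : X →+ G)
    (hi : Function.Injective i) (hm : Function.Surjective m)
    (hmidrow : AddMonoidHom.ker m = AddMonoidHom.range i)
    (hmidcol : AddMonoidHom.ker n = AddMonoidHom.range j)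
    (hsq1 : i.comp μ = j.comp ν)
    (hsq2 : m.comp j = ρ.comp πE)
    (hsq3 : n.comp i = σ.comp πH)
    (hsq4 : πF.comp m = πG.comp n)
    -- the extension (X₁, i₁, j₁, m₁, n₁) of Diagram 1
    (i₁ : H →+ X₁) (j₁ : E →+ X₁) (m₁ : X₁ →+ F) (n₁ : X₁ →+ G)
    (hi₁ : Function.Injective i₁) (hm₁ : Function.Surjective m₁)
    (hmidrow₁ : AddMonoidHom.ker m₁ = AddMonoidHom.range i₁)
    (hmidcol₁ : AddMonoidHom.ker n₁ = AddMonoidHom.range j₁)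
    (hsq1₁ : i₁.comp μ = j₁.comp ν)
    (hsq2₁ : m₁.comp j₁ = ρ.comp πE)
    (hsq3₁ : n₁.comp i₁ = σ.comp πH)
    (hsq4₁ : πF.comp m₁ = πG.comp n₁) :
    ∃ φ : X ≃+ X₁,
      (∀ p : P, φ (i (μ p)) = i₁ (μ p)) ∧
      (∀ x : X, m₁ (φ x) = m x) ∧
      (∀ x : X, n₁ (φ x) = n x) := by
  let T := diagramExtension hμ hπH hcol1 hσ hrow2 hi hm hmidrow hsq3 hsq4
  let T₁ := diagramExtension hμ hπH hcol1 hσ hrow2 hi₁ hm₁ hmidrow₁ hsq3₁ hsq4₁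
  obtain ⟨t, ht⟩ := AddGroupExtension.exists_lift_baerDiff (T := T) (T₁ := T₁)
    (Prod.map_surjective.2 ⟨hπE, hπH⟩) (iotaRS ρ σ πF πG hcol2 hrow2)
    (toPullback_comp_coprod hrow2 hcol2 hmidrow hmidcol hsq2 hsq3 hsq4)
    (toPullback_comp_coprod hrow2 hcol2 hmidrow₁ hmidcol₁ hsq2₁ hsq3₁ hsq4₁)
    fun _ => exists_coprod_eq_of_prodMap_eq_zero hrow1 hcol1 hsq1 hsq1₁
  have hY := pullbackShortComplex_shortExact ρ σ πF πG hρ hσ hπF hπG hcol2 hrow2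
  have hW := (T.baerDiff T₁).shortComplex_shortExact
  have hsplit : hW.extClass = 0 :=
    hY.eq_zero_of_mk₀_f_comp_eq_zero (fun e => let ⟨l, hl⟩ := halpha e; ⟨AddCommGrpCat.ofHom l, hl⟩)
      (hW.mk₀_comp_extClass_eq_zero_of_fac (AddCommGrpCat.ofHom t)
        (by ext x; exact DFunLike.congr_fun ht x))
  obtain ⟨φ⟩ := AddGroupExtension.nonempty_equiv_of_extClass_baerDiff_eq_zero hsplit
  refine ⟨φ.toAddEquiv, φ.map_inl, fun x => ?_, fun x => ?_⟩
  · exact congrArg (fun y : pullbackSubgroup πF πG => (y : F × G).1) (φ.rightHom_map x)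
  · exact congrArg (fun y : pullbackSubgroup πF πG => (y : F × G).2) (φ.rightHom_map x)

open Abelian in
/-- **Rakesh Pawar's uniqueness theorem** (Proposition `rpthmu` of the note), in the category
of abelian groups: if the connecting homomorphism `α : Hom(R ⊕ S, P) → Ext¹(Q,P)` of the
short exact sequence `0 → R ⊕ S → Y → Q → 0` (where `Y = F ×_Q G`) is surjective, then for
any two extensions `(X, i, j, m, n)` and `(X₁, i₁, j₁, m₁, n₁)` of Diagram 1 there is a group
isomorphism `φ : X → X₁` with `φ ∘ (i∘μ) = i₁∘μ`, `m₁ ∘ φ = m` and `n₁ ∘ φ = n`, i.e. `φ`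
carries the extension `0 → P → X → Y → 0` to `0 → P → X₁ → Y → 0` over the identities of
`P` and `Y`. -/
theorem pawar_uniqueness_of_alpha_surjective
    {P E H X X₁ : Type u} [AddCommGroup P] [AddCommGroup E] [AddCommGroup H]
    [AddCommGroup X] [AddCommGroup X₁]
    -- row 1 : 0 → P → E → R → 0
    (ν : P →+ E) (πE : E →+ R)
    (hν : Function.Injective ν) (hπE : Function.Surjective πE)
    (hrow1 : AddMonoidHom.ker πE = AddMonoidHom.range ν)
    -- row 2 : 0 → S → G → Q → 0
    (σ : S →+ G) (πG : G →+ Q)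
    (hσ : Function.Injective σ) (hπG : Function.Surjective πG)
    (hrow2 : AddMonoidHom.ker πG = AddMonoidHom.range σ)
    -- column 1 : 0 → P → H → S → 0
    (μ : P →+ H) (πH : H →+ S)
    (hμ : Function.Injective μ) (hπH : Function.Surjective πH)
    (hcol1 : AddMonoidHom.ker πH = AddMonoidHom.range μ)
    -- column 2 : 0 → R → F → Q → 0
    (ρ : R →+ F) (πF : F →+ Q)
    (hρ : Function.Injective ρ) (hπF : Function.Surjective πF)
    (hcol2 : AddMonoidHom.ker πF = AddMonoidHom.range ρ)
    -- the connecting homomorphism α is surjective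
    (halpha : Function.Surjective
      (alphaMap (P := P) ρ σ πF πG hρ hσ hπF hπG hcol2 hrow2))
    -- the extension (X, i, j, m, n) of Diagram 1
    (i : H →+ X) (j : E →+ X) (m : X →+ F) (n : X →+ G)
    (hi : Function.Injective i) (hm : Function.Surjective m)
    (hmidrow : AddMonoidHom.ker m = AddMonoidHom.range i)
    (hj : Function.Injective j) (hn : Function.Surjective n)
    (hmidcol : AddMonoidHom.ker n = AddMonoidHom.range j)
    (hsq1 : i.comp μ = j.comp ν)
    (hsq2 : m.comp j = ρ.comp πE)
    (hsq3 : n.comp i = σ.comp πH)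
    (hsq4 : πF.comp m = πG.comp n)
    -- the extension (X₁, i₁, j₁, m₁, n₁) of Diagram 1
    (i₁ : H →+ X₁) (j₁ : E →+ X₁) (m₁ : X₁ →+ F) (n₁ : X₁ →+ G)
    (hi₁ : Function.Injective i₁) (hm₁ : Function.Surjective m₁)
    (hmidrow₁ : AddMonoidHom.ker m₁ = AddMonoidHom.range i₁)
    (hj₁ : Function.Injective j₁) (hn₁ : Function.Surjective n₁)
    (hmidcol₁ : AddMonoidHom.ker n₁ = AddMonoidHom.range j₁)
    (hsq1₁ : i₁.comp μ = j₁.comp ν)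
    (hsq2₁ : m₁.comp j₁ = ρ.comp πE)
    (hsq3₁ : n₁.comp i₁ = σ.comp πH)
    (hsq4₁ : πF.comp m₁ = πG.comp n₁) :
    ∃ φ : X ≃+ X₁,
      (∀ p : P, φ (i (μ p)) = i₁ (μ p)) ∧
      (∀ x : X, m₁ (φ x) = m x) ∧
      (∀ x : X, n₁ (φ x) = n x) :=
  pawar_uniqueness_of_alpha_surjective_general ν πE hπE hrow1 σ πG hσ hπG hrow2 μ πH hμ hπH hcol1 ρ
    πF hρ hπF hcol2 halpha i j m n hi hm hmidrow hmidcol hsq1 hsq2 hsq3 hsq4 i₁ j₁ m₁ n₁ hi₁ hm₁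
    hmidrow₁ hmidcol₁ hsq1₁ hsq2₁ hsq3₁ hsq4₁
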